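/- arXiv:1007.2315 — 2 statements merged into one kernel-verified Lean document; each statement's English description precedes it below -/
import Mathlib

section
/- Let 0 ≤ ε ≤ 1/2, let t ≥ 0, and let f, g : {0,1}^n → {0,1}^k be functions whose output distributions (under a uniformly random input) have min-entropy t, i.e. Pr_x[f(x) = z] ≤ 2^{-t} and Pr_x[g(x) = z] ≤ 2^{-t} for every z ∈ {0,1}^k. Then Pr_{(x,y)_ε}[f(x) = g(y)] ≤ 2^{-tε/(1-ε)}. -/
/-!
Write `p = 2 - 2ε = 1 + ρ` with `ρ = 1 - 2ε`. The key input is hypercontractivity in bilinear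
form: for nonnegative `F, G` on the cube, `E_{(x,y)_ε}[F x G y] ≤ ‖F‖_p ‖G‖_p` (uniform
normalized `ℓ^p` norms). On one bit this is the weighted Cauchy–Schwarz inequality
`(ac + ρbd)² ≤ (a² + ρb²)(c² + ρd²)` combined with the two-point inequality
`a² + (p-1)b² ≤ ‖(a+b, a-b)‖_p²`; it tensorizes by induction on `n`.

Applied to the indicators of `f = z` and `g = z` it gives
`Pr[f x = g y] ≤ ∑_z (α_z β_z)^{1/p}` with `α, β` the output distributions. Splitting
`(αβ)^{1/p} = (αβ)^{1/2} (αβ)^{1/p - 1/2}`, the min-entropy bound makes the second factor at most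
`2^{-2t(1/p - 1/2)} = 2^{-tε/(1-ε)}`, and `∑_z √(α_z β_z) ≤ 1` by AM–GM.
-/
open Classical

/-- The weight of a pair `(x, y)` under the distribution `(x,y)_ε`. -/
noncomputable def pairWeight (ε : ℝ) {n : ℕ} (x y : Fin n → Bool) : ℝ :=
  ∏ i, if x i = y i then (1 - ε) / 2 else ε / 2

/-- `Pr_{(x,y)_ε}[P x y]`. -/
noncomputable def prPair (ε : ℝ) {n : ℕ}
    (P : (Fin n → Bool) → (Fin n → Bool) → Prop) : ℝ :=
  ∑ x : Fin n → Bool, ∑ y : Fin n → Bool, if P x y then pairWeight ε x y else 0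

/-- The output distribution of `f` on a uniformly random input. -/
noncomputable def outDist {n k : ℕ} (f : (Fin n → Bool) → (Fin k → Bool))
    (z : Fin k → Bool) : ℝ :=
  (∑ x : Fin n → Bool, if f x = z then (1 : ℝ) else 0) / 2 ^ n

open Finset

lemma two_le_rpow_add_rpow {r u v : ℝ} (hr : r ≤ 0) (hu : 0 < u) (hv : 0 < v) (huv : u * v ≤ 1) :
    2 ≤ u ^ r + v ^ r := by
  have hprod : 1 ≤ u ^ r * v ^ r := by
    rw [← Real.mul_rpow hu.le hv.le]
    exact Real.one_le_rpow_of_pos_of_le_one_of_nonpos (mul_pos hu hv) huv hr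
  nlinarith [sq_nonneg (u ^ r - v ^ r), Real.rpow_pos_of_pos hu r, Real.rpow_pos_of_pos hv r]

lemma two_mul_mul_le_rpow_sub_rpow {q x : ℝ} (hq0 : 0 ≤ q) (hq1 : q ≤ 1)
    (hx : x ∈ Set.Icc (0 : ℝ) 1) :
    2 * q * x ≤ (1 + x) ^ q - (1 - x) ^ q := by
  let h : ℝ → ℝ := fun y => (1 + y) ^ q - (1 - y) ^ q - 2 * q * y
  have hmono : MonotoneOn h (Set.Icc 0 1) := by
    refine monotoneOn_of_hasDerivWithinAt_nonneg (convex_Icc 0 1)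
      (f' := fun y => q * ((1 + y) ^ (q - 1) + (1 - y) ^ (q - 1) - 2)) ?_ ?_ ?_
    · exact Continuous.continuousOn (by fun_prop (disch := assumption))
    · rw [interior_Icc]
      intro y hy
      have h1 := ((hasDerivAt_id y).const_add 1).rpow_const (p := q)
        (Or.inl (show (0 : ℝ) < 1 + y by linarith [hy.1]).ne')
      have h2 := ((hasDerivAt_id y).const_sub 1).rpow_const (p := q)
        (Or.inl (show (0 : ℝ) < 1 - y by linarith [hy.2]).ne')
      refine (((h1.sub h2).sub ((hasDerivAt_id y).const_mul (2 * q))).congr_deriv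
        ?_).hasDerivWithinAt
      simp only [id]
      ring
    · rw [interior_Icc]
      intro y hy
      have := two_le_rpow_add_rpow (r := q - 1) (u := 1 + y) (v := 1 - y) (by linarith)
        (by linarith [hy.1]) (by linarith [hy.2]) (by nlinarith [hy.1])
      exact mul_nonneg hq0 (by linarith)
  have := hmono ⟨le_rfl, zero_le_one⟩ hx hx.1
  simp only [h] at this
  norm_num at this
  linarith

lemma two_add_mul_sq_le_rpow_add_rpow {p x : ℝ} (hp1 : 1 ≤ p) (hp2 : p ≤ 2) (hx : |x| ≤ 1) :
    2 + p * (p - 1) * x ^ 2 ≤ (1 + x) ^ p + (1 - x) ^ p := by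
  wlog hx0 : 0 ≤ x generalizing x
  · have := this (x := -x) (by rwa [abs_neg]) (by linarith)
    rw [neg_sq, sub_neg_eq_add, ← sub_eq_add_neg] at this
    linarith
  have hp0 : 0 ≤ p := by linarith
  let h : ℝ → ℝ := fun y => (1 + y) ^ p + (1 - y) ^ p - p * (p - 1) * y ^ 2
  have hmono : MonotoneOn h (Set.Icc 0 1) := by
    refine monotoneOn_of_hasDerivWithinAt_nonneg (convex_Icc 0 1)
      (f' := fun y => p * ((1 + y) ^ (p - 1) - (1 - y) ^ (p - 1) - 2 * (p - 1) * y)) ?_ ?_ ?_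
    · exact Continuous.continuousOn (by fun_prop (disch := assumption))
    · rw [interior_Icc]
      intro y hy
      have h1 := ((hasDerivAt_id y).const_add 1).rpow_const (p := p)
        (Or.inl (show (0 : ℝ) < 1 + y by linarith [hy.1]).ne')
      have h2 := ((hasDerivAt_id y).const_sub 1).rpow_const (p := p)
        (Or.inl (show (0 : ℝ) < 1 - y by linarith [hy.2]).ne')
      refine (((h1.add h2).sub ((hasDerivAt_pow 2 y).const_mul (p * (p - 1)))).congr_deriv
        ?_).hasDerivWithinAt
      simp only [id]
      ring
    · rw [interior_Icc]
      intro y hy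
      have := two_mul_mul_le_rpow_sub_rpow (q := p - 1) (by linarith) (by linarith)
        ⟨hy.1.le, hy.2.le⟩
      exact mul_nonneg (by linarith) (by linarith)
  have := hmono ⟨le_rfl, zero_le_one⟩ ⟨hx0, (le_abs_self x).trans hx⟩ hx0
  simp only [h] at this
  norm_num at this
  linarith

lemma one_add_mul_sq_le_rpow {p x : ℝ} (hp1 : 1 ≤ p) (hp2 : p ≤ 2) (hx : |x| ≤ 1) :
    1 + (p - 1) * x ^ 2 ≤ (((1 + x) ^ p + (1 - x) ^ p) / 2) ^ (2 / p) := by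
  have hx2 : 0 ≤ (p - 1) * x ^ 2 := mul_nonneg (by linarith) (sq_nonneg x)
  have hx1 : x ≤ 1 := (le_abs_self x).trans hx
  have hx1' : -1 ≤ x := neg_le_of_abs_le hx
  have hD : 0 ≤ ((1 + x) ^ p + (1 - x) ^ p) / 2 := by
    have := Real.rpow_nonneg (show (0 : ℝ) ≤ 1 + x by linarith) p
    have := Real.rpow_nonneg (show (0 : ℝ) ≤ 1 - x by linarith) p
    positivity
  rw [← inv_div p 2, Real.le_rpow_inv_iff_of_pos (by linarith) hD (by positivity)]
  calc (1 + (p - 1) * x ^ 2) ^ (p / 2)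
      ≤ 1 + p / 2 * ((p - 1) * x ^ 2) :=
        rpow_one_add_le_one_add_mul_self (by linarith) (by positivity) (by linarith)
    _ ≤ ((1 + x) ^ p + (1 - x) ^ p) / 2 := by
        linarith [two_add_mul_sq_le_rpow_add_rpow hp1 hp2 hx]

lemma sq_add_mul_sq_le_rpow {p a b : ℝ} (hp1 : 1 ≤ p) (hp2 : p ≤ 2) (hb : |b| ≤ a) :
    a ^ 2 + (p - 1) * b ^ 2 ≤ (((a + b) ^ p + (a - b) ^ p) / 2) ^ (2 / p) := by
  obtain ha | ha := (abs_nonneg b).trans hb |>.eq_or_lt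
  · obtain rfl : b = 0 := abs_nonpos_iff.mp (ha ▸ hb)
    subst ha
    simp [Real.zero_rpow (by linarith : p ≠ 0), Real.zero_rpow (by positivity : 2 / p ≠ 0)]
  set x := b / a
  have hbx : b = a * x := (mul_div_cancel₀ b ha.ne').symm
  have hx : |x| ≤ 1 := by rw [abs_div, abs_of_pos ha]; exact div_le_one_of_le₀ hb ha.le
  have hx1 : x ≤ 1 := (le_abs_self x).trans hx
  have hx1' : -1 ≤ x := neg_le_of_abs_le hx
  have hscale : ((a + b) ^ p + (a - b) ^ p) / 2 = a ^ p * (((1 + x) ^ p + (1 - x) ^ p) / 2) := by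
    rw [hbx, ← mul_one_add, ← mul_one_sub, Real.mul_rpow ha.le (by linarith),
      Real.mul_rpow ha.le (by linarith)]
    ring
  have hD : 0 ≤ ((1 + x) ^ p + (1 - x) ^ p) / 2 := by
    have := Real.rpow_nonneg (show (0 : ℝ) ≤ 1 + x by linarith) p
    have := Real.rpow_nonneg (show (0 : ℝ) ≤ 1 - x by linarith) p
    positivity
  have hap : (a ^ p) ^ (2 / p) = a ^ 2 := by
    rw [← Real.rpow_mul ha.le, mul_div_cancel₀ _ (by linarith : p ≠ 0)]
    norm_cast
  rw [hscale, Real.mul_rpow (by positivity) hD, hap, hbx]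
  nlinarith [one_add_mul_sq_le_rpow hp1 hp2 hx, sq_nonneg a]

noncomputable def bitWeight (ε : ℝ) (b c : Bool) : ℝ := if b = c then (1 - ε) / 2 else ε / 2

lemma bitWeight_nonneg {ε : ℝ} (hε0 : 0 ≤ ε) (hε1 : ε ≤ 1) (b c : Bool) :
    0 ≤ bitWeight ε b c := by
  unfold bitWeight
  split_ifs <;> linarith

noncomputable def uniformLpNorm {α : Type*} [Fintype α] (p : ℝ) (F : α → ℝ) : ℝ :=
  ((∑ x, F x ^ p) / Fintype.card α) ^ (1 / p)

section uniformLpNorm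

variable {α : Type*} [Fintype α] {p : ℝ} {F : α → ℝ}

lemma uniformLpNorm_nonneg (hF : ∀ x, 0 ≤ F x) : 0 ≤ uniformLpNorm p F :=
  Real.rpow_nonneg
    (div_nonneg (sum_nonneg fun x _ => Real.rpow_nonneg (hF x) p) (Nat.cast_nonneg _)) _

lemma uniformLpNorm_rpow (hp : p ≠ 0) (hF : ∀ x, 0 ≤ F x) :
    uniformLpNorm p F ^ p = (∑ x, F x ^ p) / Fintype.card α := by
  rw [uniformLpNorm, one_div, Real.rpow_inv_rpow
    (div_nonneg (sum_nonneg fun x _ => Real.rpow_nonneg (hF x) p) (Nat.cast_nonneg _)) hp]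

lemma uniformLpNorm_of_unique [Unique α] (hp : p ≠ 0) (hF : ∀ x, 0 ≤ F x) :
    uniformLpNorm p F = F default := by
  rw [uniformLpNorm, Fintype.sum_unique, Fintype.card_unique, Nat.cast_one, div_one, one_div,
    Real.rpow_rpow_inv (hF default) hp]

lemma uniformLpNorm_sq_bool {u : Bool → ℝ} (hu : ∀ b, 0 ≤ u b) :
    uniformLpNorm p u ^ 2 = ((u true ^ p + u false ^ p) / 2) ^ (2 / p) := by
  rw [uniformLpNorm, Fintype.sum_bool, Fintype.card_bool, ← Real.rpow_natCast, ← Real.rpow_mul]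
  · norm_num
    ring_nf
  · have := Real.rpow_nonneg (hu true) p
    have := Real.rpow_nonneg (hu false) p
    positivity

end uniformLpNorm

lemma sum_fin_cons {α M : Type*} [Fintype α] [AddCommMonoid M] {n : ℕ}
    (h : (Fin (n + 1) → α) → M) :
    ∑ x, h x = ∑ b, ∑ x : Fin n → α, h (Fin.cons b x) := by
  rw [← Fintype.sum_prod_type']
  exact (Fintype.sum_equiv (Fin.consEquiv fun _ => α) _ _ fun _ => rfl).symm

lemma uniformLpNorm_cons {α : Type*} [Fintype α] {p : ℝ} (hp : p ≠ 0) {n : ℕ}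
    {F : (Fin (n + 1) → α) → ℝ} (hF : ∀ x, 0 ≤ F x) :
    uniformLpNorm p F =
      uniformLpNorm p fun b => uniformLpNorm p fun x : Fin n → α => F (Fin.cons b x) := by
  conv_rhs => rw [uniformLpNorm]
  simp only [uniformLpNorm_rpow hp fun x => hF _]
  rw [uniformLpNorm, sum_fin_cons, ← sum_div, div_div, Fintype.card_fun, Fintype.card_fun,
    Fintype.card_fin, Fintype.card_fin, pow_succ]
  push_cast
  ring_nf

lemma pairWeight_cons (ε : ℝ) {n : ℕ} (b c : Bool) (x y : Fin n → Bool) :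
    pairWeight ε (Fin.cons b x) (Fin.cons c y) = bitWeight ε b c * pairWeight ε x y := by
  simp only [pairWeight, Fin.prod_univ_succ, Fin.cons_zero, Fin.cons_succ, bitWeight]

noncomputable def noiseForm (ε : ℝ) {n : ℕ} (F G : (Fin n → Bool) → ℝ) : ℝ :=
  ∑ x, ∑ y, pairWeight ε x y * (F x * G y)

lemma noiseForm_cons (ε : ℝ) {n : ℕ} (F G : (Fin (n + 1) → Bool) → ℝ) :
    noiseForm ε F G = ∑ b, ∑ c, bitWeight ε b c *
      noiseForm ε (fun x => F (Fin.cons b x)) (fun y => G (Fin.cons c y)) := by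
  simp only [noiseForm]
  rw [sum_fin_cons]
  refine sum_congr rfl fun b _ => ?_
  simp only [sum_fin_cons (fun y => pairWeight ε _ y * _)]
  rw [sum_comm]
  simp only [mul_sum, pairWeight_cons, mul_assoc]

lemma sum_bitWeight_mul_le_uniformLpNorm_mul {ε : ℝ} (hε0 : 0 ≤ ε) (hε1 : ε ≤ 1 / 2)
    {u v : Bool → ℝ} (hu : ∀ b, 0 ≤ u b) (hv : ∀ c, 0 ≤ v c) :
    ∑ b, ∑ c, bitWeight ε b c * (u b * v c)
      ≤ uniformLpNorm (2 - 2 * ε) u * uniformLpNorm (2 - 2 * ε) v := by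
  set ρ := 1 - 2 * ε
  have hρ : 0 ≤ ρ := by linarith
  have two_point : ∀ w : Bool → ℝ, (∀ b, 0 ≤ w b) →
      ((w true + w false) / 2) ^ 2 + ρ * ((w true - w false) / 2) ^ 2
        ≤ uniformLpNorm (2 - 2 * ε) w ^ 2 := by
    intro w hw
    have hb : |(w true - w false) / 2| ≤ (w true + w false) / 2 :=
      abs_le.mpr ⟨by linarith [hw true], by linarith [hw false]⟩
    have := sq_add_mul_sq_le_rpow (p := 2 - 2 * ε) (by linarith) (by linarith) hb
    rwa [show (2 - 2 * ε - 1) = ρ by ring,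
      show (w true + w false) / 2 + (w true - w false) / 2 = w true by ring,
      show (w true + w false) / 2 - (w true - w false) / 2 = w false by ring,
      ← uniformLpNorm_sq_bool hw] at this
  set a := (u true + u false) / 2
  set b := (u true - u false) / 2
  set c := (v true + v false) / 2
  set d := (v true - v false) / 2
  have hform : ∑ b, ∑ c, bitWeight ε b c * (u b * v c) = a * c + ρ * (b * d) := by
    simp only [Fintype.sum_bool, bitWeight, a, b, c, d, ρ]
    norm_num
    ring
  have hcs : (a * c + ρ * (b * d)) ^ 2 ≤ (a ^ 2 + ρ * b ^ 2) * (c ^ 2 + ρ * d ^ 2) := by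
    nlinarith [mul_nonneg hρ (sq_nonneg (a * d - b * c))]
  rw [hform]
  refine (le_abs_self _).trans (abs_le_of_sq_le_sq ?_
    (mul_nonneg (uniformLpNorm_nonneg hu) (uniformLpNorm_nonneg hv)))
  rw [mul_pow]
  exact hcs.trans (mul_le_mul (two_point u hu) (two_point v hv) (by positivity) (sq_nonneg _))

theorem noiseForm_le_uniformLpNorm_mul {ε : ℝ} (hε0 : 0 ≤ ε) (hε1 : ε ≤ 1 / 2) {n : ℕ}
    {F G : (Fin n → Bool) → ℝ} (hF : ∀ x, 0 ≤ F x) (hG : ∀ y, 0 ≤ G y) :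
    noiseForm ε F G ≤ uniformLpNorm (2 - 2 * ε) F * uniformLpNorm (2 - 2 * ε) G := by
  have hp : 2 - 2 * ε ≠ 0 := by linarith
  induction n with
  | zero =>
    simp only [noiseForm, Fintype.sum_unique, pairWeight, Fin.prod_univ_zero, one_mul,
      uniformLpNorm_of_unique hp hF, uniformLpNorm_of_unique hp hG, le_refl]
  | succ n ih =>
    rw [noiseForm_cons, uniformLpNorm_cons hp hF, uniformLpNorm_cons hp hG]
    refine (sum_le_sum fun b _ => sum_le_sum fun c _ => mul_le_mul_of_nonneg_left
      (ih (fun x => hF _) (fun y => hG _)) (bitWeight_nonneg hε0 (by linarith) b c)).trans ?_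
    exact sum_bitWeight_mul_le_uniformLpNorm_mul hε0 hε1
      (fun b => uniformLpNorm_nonneg fun x => hF _) (fun c => uniformLpNorm_nonneg fun y => hG _)

lemma prPair_eq_sum_noiseForm (ε : ℝ) {n k : ℕ} (f g : (Fin n → Bool) → (Fin k → Bool)) :
    prPair ε (fun x y => f x = g y) = ∑ z, noiseForm ε (fun x => if f x = z then (1 : ℝ) else 0)
      (fun y => if g y = z then 1 else 0) := by
  simp only [prPair, noiseForm]
  symm
  rw [sum_comm]
  refine sum_congr rfl fun x _ => ?_
  rw [sum_comm]
  refine sum_congr rfl fun y _ => ?_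
  simp [mul_ite]

lemma uniformLpNorm_indicator {n k : ℕ} {p : ℝ} (hp : p ≠ 0)
    (f : (Fin n → Bool) → (Fin k → Bool)) (z : Fin k → Bool) :
    uniformLpNorm p (fun x => if f x = z then (1 : ℝ) else 0) = outDist f z ^ (1 / p) := by
  have hpow : ∀ x, (if f x = z then (1 : ℝ) else 0) ^ p = if f x = z then 1 else 0 := by
    intro x
    split_ifs <;> simp [hp]
  simp only [uniformLpNorm, outDist, hpow, Fintype.card_fun, Fintype.card_bool, Fintype.card_fin]
  push_cast
  rfl

lemma sum_rpow_mul_le {ι : Type*} [Fintype ι] {α β : ι → ℝ} {δ r : ℝ}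
    (hα0 : ∀ i, 0 ≤ α i) (hβ0 : ∀ i, 0 ≤ β i) (hα : ∀ i, α i ≤ δ) (hβ : ∀ i, β i ≤ δ)
    (hα1 : ∑ i, α i ≤ 1) (hβ1 : ∑ i, β i ≤ 1) (hr : 1 / 2 ≤ r) :
    ∑ i, (α i * β i) ^ r ≤ (δ * δ) ^ (r - 1 / 2) := by
  have hδ : ∀ i, α i * β i ≤ δ * δ := fun i =>
    mul_le_mul (hα i) (hβ i) (hβ0 i) ((hα0 i).trans (hα i))
  calc ∑ i, (α i * β i) ^ r
      = ∑ i, α i ^ (1 / 2 : ℝ) * β i ^ (1 / 2 : ℝ) * (α i * β i) ^ (r - 1 / 2) := by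
        refine sum_congr rfl fun i _ => ?_
        rw [← Real.mul_rpow (hα0 i) (hβ0 i), ← Real.rpow_add' (mul_nonneg (hα0 i) (hβ0 i))
          (by linarith), add_sub_cancel]
    _ ≤ ∑ i, (1 / 2 * α i + 1 / 2 * β i) * (δ * δ) ^ (r - 1 / 2) := by
        refine sum_le_sum fun i _ => mul_le_mul ?_ ?_
          (Real.rpow_nonneg (mul_nonneg (hα0 i) (hβ0 i)) _) (by linarith [hα0 i, hβ0 i])
        · exact Real.geom_mean_le_arith_mean2_weighted (by norm_num) (by norm_num) (hα0 i)
            (hβ0 i) (by norm_num)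
        · exact Real.rpow_le_rpow (mul_nonneg (hα0 i) (hβ0 i)) (hδ i) (by linarith)
    _ = (∑ i, α i + ∑ i, β i) / 2 * (δ * δ) ^ (r - 1 / 2) := by
        rw [← sum_mul, sum_add_distrib, ← mul_sum, ← mul_sum]
        ring
    _ ≤ (δ * δ) ^ (r - 1 / 2) := by
        have := Real.rpow_nonneg (mul_self_nonneg δ) (r - 1 / 2)
        nlinarith

lemma sum_outDist {n k : ℕ} (f : (Fin n → Bool) → (Fin k → Bool)) : ∑ z, outDist f z = 1 := by
  simp only [outDist, ← sum_div]
  rw [sum_comm]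
  simp

lemma outDist_nonneg {n k : ℕ} (f : (Fin n → Bool) → (Fin k → Bool)) (z : Fin k → Bool) :
    0 ≤ outDist f z :=
  div_nonneg (sum_nonneg fun x _ => by split_ifs <;> norm_num) (by positivity)

theorem stmt1_general {n k : ℕ} (ε t : ℝ) (hε0 : 0 ≤ ε) (hε1 : ε ≤ 1 / 2)
    (f g : (Fin n → Bool) → (Fin k → Bool))
    (hf : ∀ z, outDist f z ≤ (2 : ℝ) ^ (-t))
    (hg : ∀ z, outDist g z ≤ (2 : ℝ) ^ (-t)) :
    prPair ε (fun x y => f x = g y) ≤ (2 : ℝ) ^ (-(t * ε) / (1 - ε)) := by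
  have hp : 2 - 2 * ε ≠ 0 := by linarith
  have hind : ∀ (h : (Fin n → Bool) → (Fin k → Bool)) z x, 0 ≤ if h x = z then (1 : ℝ) else 0 :=
    fun h z x => by split_ifs <;> norm_num
  calc prPair ε (fun x y => f x = g y)
      ≤ ∑ z, (outDist f z * outDist g z) ^ (1 / (2 - 2 * ε)) := by
        rw [prPair_eq_sum_noiseForm]
        gcongr with z
        rw [Real.mul_rpow (outDist_nonneg f z) (outDist_nonneg g z),
          ← uniformLpNorm_indicator hp, ← uniformLpNorm_indicator hp]
        exact noiseForm_le_uniformLpNorm_mul hε0 hε1 (hind f z) (hind g z)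
    _ ≤ (2 ^ (-t) * 2 ^ (-t)) ^ (1 / (2 - 2 * ε) - 1 / 2) :=
        sum_rpow_mul_le (outDist_nonneg f) (outDist_nonneg g) hf hg (sum_outDist f).le
          (sum_outDist g).le (by rw [div_le_div_iff₀] <;> linarith)
    _ = 2 ^ (-(t * ε) / (1 - ε)) := by
        rw [← Real.rpow_add two_pos, ← Real.rpow_mul zero_le_two]
        have : 1 - ε ≠ 0 := by linarith
        congr 1
        field_simp
        ring

theorem stmt1 {n k : ℕ} (ε t : ℝ) (hε0 : 0 ≤ ε) (hε1 : ε ≤ 1 / 2) (ht : 0 ≤ t)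
    (f g : (Fin n → Bool) → (Fin k → Bool))
    (hf : ∀ z, outDist f z ≤ (2 : ℝ) ^ (-t))
    (hg : ∀ z, outDist g z ≤ (2 : ℝ) ^ (-t)) :
    prPair ε (fun x y => f x = g y) ≤ (2 : ℝ) ^ (-(t * ε) / (1 - ε)) :=
  stmt1_general ε t hε0 hε1 f g hf hg
end

section
/- Let 0 ≤ ε ≤ 1/2 and let f, g : {0,1}^n → {0,1}^k be functions such that f(x) and g(x) are each exactly uniformly distributed on {0,1}^k when x is uniform on {0,1}^n. Then Pr_{(x,y)_ε}[f(x) = g(y)] ≤ 2^{-kε/(1-ε)}. -/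
/-!
Put `ρ = 1 - 2ε` and let `T_ρ` be the noise operator on the cube, so that
`Pr[f x = g y] = ∑_z 𝔼[1_{f = z} · T_ρ 1_{g = z}]`. Since `T_ρ = T_σ T_σ` with `σ = √ρ` and
`T_σ` is self-adjoint, each summand is `𝔼[T_σ 1_{f = z} · T_σ 1_{g = z}]`, which Cauchy–Schwarz
and Bonami–Beckner hypercontractivity `‖T_σ h‖₂ ≤ ‖h‖_{1+σ²}` bound by
`‖1_{f = z}‖_{1+ρ} ‖1_{g = z}‖_{1+ρ} = 2^{-2k/(1+ρ)}`. Summing over the `2^k` values of `z`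
gives `2^{k (1 - 2/(1+ρ))} = 2^{-kε/(1-ε)}`.

Hypercontractivity is proved by induction on `n`: the one-bit case is the two-point inequality,
and the induction step is Minkowski's integral inequality, reversed because the exponent
`(1+σ²)/2` is at most `1`.
-/

open Classical

open Finset Real Set
open scoped BigOperators

lemma two_mul_mul_le_one_add_rpow_sub_one_sub_rpow {q t : ℝ} (hq0 : 0 ≤ q) (hq1 : q ≤ 1)
    (ht0 : 0 ≤ t) (ht1 : t ≤ 1) : 2 * q * t ≤ (1 + t) ^ q - (1 - t) ^ q := by
  let φ : ℝ → ℝ := fun s => (1 + s) ^ q - (1 - s) ^ q - 2 * q * s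
  have hderiv : ∀ s ∈ Ioo (0 : ℝ) 1,
      HasDerivAt φ (1 * q * (1 + s) ^ (q - 1) - -1 * q * (1 - s) ^ (q - 1) - 2 * q * 1) s :=
    fun s hs => ((((hasDerivAt_id' s).const_add 1).rpow_const (.inl (by linarith [hs.1]))).sub
      (((hasDerivAt_id' s).const_sub 1).rpow_const (.inl (by linarith [hs.2])))).sub
      ((hasDerivAt_id' s).const_mul _)
  have hmono : MonotoneOn φ (Icc 0 1) := by
    refine monotoneOn_of_hasDerivWithinAt_nonneg (convex_Icc 0 1) ?_
      (fun s hs => (hderiv s (by simpa using hs)).hasDerivWithinAt) fun s hs => ?_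
    · exact (((continuousOn_const.add continuousOn_id).rpow_const fun _ _ => .inr hq0).sub
        ((continuousOn_const.sub continuousOn_id).rpow_const fun _ _ => .inr hq0)).sub
        (continuousOn_const.mul continuousOn_id)
    · rw [interior_Icc] at hs
      -- AM-GM: the two powers have product `(1 - s ^ 2) ^ (q - 1) ≥ 1`, so their sum is `≥ 2`.
      have hx : 0 < (1 + s) ^ (q - 1) := rpow_pos_of_pos (by linarith [hs.1]) _
      have hy : 0 < (1 - s) ^ (q - 1) := rpow_pos_of_pos (by linarith [hs.2]) _
      have hxy : 1 ≤ (1 + s) ^ (q - 1) * (1 - s) ^ (q - 1) := by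
        rw [← mul_rpow (by linarith [hs.1]) (by linarith [hs.2])]
        exact one_le_rpow_of_pos_of_le_one_of_nonpos (by nlinarith [hs.1, hs.2])
          (by nlinarith [sq_nonneg s]) (by linarith)
      nlinarith [sq_nonneg ((1 + s) ^ (q - 1) - (1 - s) ^ (q - 1))]
  have := hmono ⟨le_rfl, zero_le_one⟩ ⟨ht0, ht1⟩ ht0
  simp only [φ, add_zero, sub_zero, one_rpow, mul_zero] at this
  linarith

lemma one_add_mul_sq_le_rpow_add_rpow {p t : ℝ} (hp1 : 1 ≤ p) (hp2 : p ≤ 2)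
    (ht0 : 0 ≤ t) (ht1 : t ≤ 1) :
    1 + p * (p - 1) / 2 * t ^ 2 ≤ ((1 + t) ^ p + (1 - t) ^ p) / 2 := by
  let F : ℝ → ℝ := fun s => ((1 + s) ^ p + (1 - s) ^ p) / 2 - p * (p - 1) / 2 * s ^ 2
  have hderiv : ∀ s ∈ Ioo (0 : ℝ) 1, HasDerivAt F ((1 * p * (1 + s) ^ (p - 1) +
      -1 * p * (1 - s) ^ (p - 1)) / 2 - p * (p - 1) / 2 * (↑2 * s ^ (2 - 1))) s :=
    fun s hs => (((((hasDerivAt_id' s).const_add 1).rpow_const (.inl (by linarith [hs.1]))).add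
      (((hasDerivAt_id' s).const_sub 1).rpow_const (.inl (by linarith [hs.2])))).div_const 2).sub
      ((hasDerivAt_pow 2 s).const_mul _)
  have hmono : MonotoneOn F (Icc 0 1) := by
    refine monotoneOn_of_hasDerivWithinAt_nonneg (convex_Icc 0 1) ?_
      (fun s hs => (hderiv s (by simpa using hs)).hasDerivWithinAt) fun s hs => ?_
    · have hp0 : 0 ≤ p := by linarith
      exact ((((continuousOn_const.add continuousOn_id).rpow_const fun _ _ => .inr hp0).add
        ((continuousOn_const.sub continuousOn_id).rpow_const fun _ _ => .inr hp0)).div_const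
        2).sub (continuousOn_const.mul (continuousOn_pow 2))
    · rw [interior_Icc] at hs
      have := two_mul_mul_le_one_add_rpow_sub_one_sub_rpow (q := p - 1) (by linarith) (by linarith)
        hs.1.le hs.2.le
      simp only [Nat.add_one_sub_one, pow_one]
      nlinarith
  have := hmono ⟨le_rfl, zero_le_one⟩ ⟨ht0, ht1⟩ ht0
  norm_num [F] at this
  linarith

lemma two_point_inequality_of_le {p a b : ℝ} (hp1 : 1 ≤ p) (hp2 : p ≤ 2) (hb : 0 ≤ b)
    (hba : b ≤ a) :
    (a ^ 2 + (p - 1) * b ^ 2) ^ (p / 2) ≤ ((a + b) ^ p + (a - b) ^ p) / 2 := by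
  obtain rfl | ha := (hb.trans hba).eq_or_lt
  · obtain rfl : b = 0 := le_antisymm hba hb
    simp [zero_rpow (by linarith : p / 2 ≠ 0), zero_rpow (by linarith : p ≠ 0)]
  obtain ⟨t, ht0, ht1, rfl⟩ : ∃ t, 0 ≤ t ∧ t ≤ 1 ∧ b = a * t :=
    ⟨b / a, div_nonneg hb ha.le, (div_le_one ha).mpr hba, by field_simp⟩
  have hbern : (1 + (p - 1) * t ^ 2) ^ (p / 2) ≤ 1 + p / 2 * ((p - 1) * t ^ 2) :=
    rpow_one_add_le_one_add_mul_self (by nlinarith) (by linarith) (by linarith)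
  have hnorm := (hbern.trans_eq (by ring)).trans (one_add_mul_sq_le_rpow_add_rpow hp1 hp2 ht0 ht1)
  have hscale (s : ℝ) (hs : 0 ≤ s) : a ^ p * s ^ p = (a * s) ^ p := (mul_rpow ha.le hs).symm
  calc (a ^ 2 + (p - 1) * (a * t) ^ 2) ^ (p / 2)
      = a ^ p * (1 + (p - 1) * t ^ 2) ^ (p / 2) := by
        rw [show a ^ p = (a ^ 2) ^ (p / 2) by rw [← rpow_natCast, ← rpow_mul ha.le]; ring_nf,
          ← mul_rpow (by positivity) (by nlinarith)]
        ring_nf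
    _ ≤ a ^ p * (((1 + t) ^ p + (1 - t) ^ p) / 2) := by gcongr
    _ = ((a + a * t) ^ p + (a - a * t) ^ p) / 2 := by
        rw [mul_div_assoc', mul_add, hscale _ (by linarith), hscale _ (by linarith)]
        ring_nf

lemma two_point_inequality {p : ℝ} (hp1 : 1 ≤ p) (hp2 : p ≤ 2) (a b : ℝ) :
    (a ^ 2 + (p - 1) * b ^ 2) ^ (p / 2) ≤ (|a + b| ^ p + |a - b| ^ p) / 2 := by
  wlog hab : |b| ≤ |a| generalizing a b
  · have hba : |a| ≤ |b| := le_of_not_ge hab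
    have hsq : a ^ 2 ≤ b ^ 2 := sq_le_sq.mpr hba
    calc (a ^ 2 + (p - 1) * b ^ 2) ^ (p / 2) ≤ (b ^ 2 + (p - 1) * a ^ 2) ^ (p / 2) :=
          rpow_le_rpow (by nlinarith) (by nlinarith) (by linarith)
      _ ≤ (|b + a| ^ p + |b - a| ^ p) / 2 := this b a hba
      _ = (|a + b| ^ p + |a - b| ^ p) / 2 := by rw [add_comm b, abs_sub_comm]
  have key := two_point_inequality_of_le hp1 hp2 (abs_nonneg b) hab
  rw [sq_abs, sq_abs] at key
  obtain ⟨hadd, hsub⟩ | ⟨hadd, hsub⟩ : (|a + b| = |a| + |b| ∧ |a - b| = |a| - |b|) ∨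
      (|a + b| = |a| - |b| ∧ |a - b| = |a| + |b|) := by grind
  · rwa [hadd, hsub]
  · rwa [hadd, hsub, add_comm (_ ^ p)]

lemma expect_rpow_inv_le_rpow_inv_expect {ι κ : Type*} [Fintype ι] [Fintype κ] {r : ℝ}
    (hr0 : 0 < r) (hr1 : r ≤ 1) {F : κ → ι → ℝ} (hF : ∀ c x, 0 ≤ F c x) :
    𝔼 c, (𝔼 x, F c x ^ r) ^ r⁻¹ ≤ (𝔼 x, (𝔼 c, F c x) ^ r) ^ r⁻¹ := by
  set q := r⁻¹
  set N : ℝ := (Fintype.card κ : ℝ)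
  have hq : 1 ≤ q := one_le_inv₀ hr0 |>.mpr hr1
  have : Fact (1 ≤ ENNReal.ofReal q) := ⟨by simpa using ENNReal.ofReal_le_ofReal hq⟩
  have hq' : (ENNReal.ofReal q).toReal = q := ENNReal.toReal_ofReal (by linarith)
  have hN : 0 ≤ N := Nat.cast_nonneg _
  have hE : ∀ c, 0 ≤ 𝔼 x, F c x ^ r := fun c => expect_nonneg fun x _ => rpow_nonneg (hF c x) r
  have hnorm (v : κ → ℝ) (hv : ∀ c, 0 ≤ v c) :
      ‖WithLp.toLp (ENNReal.ofReal q) fun c => (v c / N) ^ r‖ = (𝔼 c, v c) ^ r := by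
    rw [PiLp.norm_eq_sum (by rw [hq']; positivity), hq', one_div, inv_inv,
      Fintype.expect_eq_sum_div_card, sum_div]
    congr 1
    refine sum_congr rfl fun c _ => ?_
    rw [Real.norm_of_nonneg (rpow_nonneg (div_nonneg (hv c) hN) r),
      rpow_rpow_inv (div_nonneg (hv c) hN) hr0.ne']
  -- Minkowski's inequality in `ℓ^q(κ)` for the vectors `c ↦ (F c x / N) ^ r`.
  have hmink := le_expect_of_subadditive (s := univ) (m := norm) norm_zero norm_add_le
    (f := fun x => WithLp.toLp (ENNReal.ofReal q) fun c => (F c x / N) ^ r) fun n x => by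
      rw [← NNRat.cast_smul_eq_nnqsmul ℝ, norm_smul, NNRat.smul_def]
      simp
  have hexpect : 𝔼 x, WithLp.toLp (ENNReal.ofReal q) (fun c => (F c x / N) ^ r) =
      WithLp.toLp (ENNReal.ofReal q) fun c => ((𝔼 x, F c x ^ r) ^ q / N) ^ r := by
    ext c
    dsimp only
    rw [div_rpow (rpow_nonneg (hE c) _) hN, rpow_inv_rpow (hE c) hr0.ne']
    simp [Finset.expect, div_rpow (hF c _) hN, smul_div_assoc, sum_div]
  rw [hexpect, hnorm _ fun c => rpow_nonneg (hE c) q] at hmink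
  simp only [hnorm _ fun c => hF c _] at hmink
  calc _ = ((𝔼 c, (𝔼 x, F c x ^ r) ^ q) ^ r) ^ q :=
        (rpow_rpow_inv (expect_nonneg fun c _ => rpow_nonneg (hE c) q) hr0.ne').symm
    _ ≤ _ := rpow_le_rpow (rpow_nonneg (expect_nonneg fun c _ => rpow_nonneg (hE c) q) r) hmink
        (by linarith)

lemma expect_fin_cons {α M : Type*} [Fintype α] [AddCommMonoid M] [Module ℚ≥0 M] {n : ℕ}
    (F : (Fin (n + 1) → α) → M) : 𝔼 x, F x = 𝔼 c, 𝔼 x, F (Fin.cons c x) := by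
  rw [← Fintype.expect_equiv (Fin.consEquiv fun _ => α) (fun p => F (Fin.cons p.1 p.2)) F
    fun _ => rfl, ← univ_product_univ, expect_product]

lemma expect_bool {K : Type*} [Semifield K] [CharZero K] (f : Bool → K) :
    𝔼 c, f c = (f true + f false) / 2 := by
  rw [Fintype.expect_eq_sum_div_card, Fintype.sum_bool, Fintype.card_bool, Nat.cast_two]

lemma sq_rpow_div_two (a p : ℝ) : (a ^ 2) ^ (p / 2) = |a| ^ p := by
  rw [← sq_abs, ← rpow_natCast, ← rpow_mul (abs_nonneg a)]
  ring_nf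

-- `noiseKernel ρ x` is the law of a `ρ`-correlated copy of `x`.
noncomputable def noiseWeight (ρ : ℝ) (a b : Bool) : ℝ :=
  if a = b then (1 + ρ) / 2 else (1 - ρ) / 2

noncomputable def noiseKernel (ρ : ℝ) {n : ℕ} (x y : Fin n → Bool) : ℝ :=
  ∏ i, noiseWeight ρ (x i) (y i)

noncomputable def noiseOp (ρ : ℝ) {n : ℕ} (h : (Fin n → Bool) → ℝ) (x : Fin n → Bool) : ℝ :=
  ∑ y, noiseKernel ρ x y * h y

lemma noiseKernel_comm (ρ : ℝ) {n : ℕ} (x y : Fin n → Bool) :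
    noiseKernel ρ x y = noiseKernel ρ y x := by
  simp only [noiseKernel, noiseWeight, eq_comm]

lemma sum_noiseWeight_mul (σ τ : ℝ) (a b : Bool) :
    ∑ c, noiseWeight σ a c * noiseWeight τ c b = noiseWeight (σ * τ) a b := by
  cases a <;> cases b <;> simp [noiseWeight] <;> ring

lemma sum_noiseKernel_mul (σ τ : ℝ) {n : ℕ} (x y : Fin n → Bool) :
    ∑ z, noiseKernel σ x z * noiseKernel τ z y = noiseKernel (σ * τ) x y := by
  simp only [noiseKernel, ← sum_noiseWeight_mul, Fintype.prod_sum, ← prod_mul_distrib]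

lemma noiseOp_noiseOp (σ τ : ℝ) {n : ℕ} (h : (Fin n → Bool) → ℝ) :
    noiseOp σ (noiseOp τ h) = noiseOp (σ * τ) h := by
  ext x
  simp only [noiseOp, ← sum_noiseKernel_mul, mul_sum, sum_mul]
  rw [sum_comm]
  exact sum_congr rfl fun _ _ => sum_congr rfl fun _ _ => by ring

lemma expect_mul_noiseOp (ρ : ℝ) {n : ℕ} (u w : (Fin n → Bool) → ℝ) :
    𝔼 x, u x * noiseOp ρ w x = 𝔼 x, noiseOp ρ u x * w x := by
  simp only [Fintype.expect_eq_sum_div_card, noiseOp, mul_sum, sum_mul]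
  rw [sum_comm]
  exact congrArg (· / _) <| sum_congr rfl fun _ _ => sum_congr rfl fun _ _ => by
    rw [noiseKernel_comm]; ring

lemma noiseOp_cons (ρ : ℝ) {n : ℕ} (h : (Fin (n + 1) → Bool) → ℝ) (c : Bool)
    (x : Fin n → Bool) :
    noiseOp ρ h (Fin.cons c x) =
      noiseOp ρ (fun y => ∑ b, noiseWeight ρ c b * h (Fin.cons b y)) x := by
  simp only [noiseOp, mul_sum]
  rw [← (Fin.consEquiv fun _ => Bool).sum_comp, Fintype.sum_prod_type, sum_comm]
  refine sum_congr rfl fun y _ => sum_congr rfl fun b _ => ?_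
  simp only [noiseKernel, Fin.prod_univ_succ, Fin.consEquiv, Equiv.coe_fn_mk, Fin.cons_zero,
    Fin.cons_succ]
  ring

lemma noiseOp_fin_zero (ρ : ℝ) (h : (Fin 0 → Bool) → ℝ) (x : Fin 0 → Bool) :
    noiseOp ρ h x = h x := by
  simp [noiseOp, noiseKernel, Subsingleton.elim _ x]

lemma rpow_expect_sq_sum_noiseWeight_le {σ : ℝ} (hσ0 : 0 ≤ σ) (hσ1 : σ ≤ 1) (f : Bool → ℝ) :
    (𝔼 c, (∑ b, noiseWeight σ c b * f b) ^ 2) ^ ((1 + σ ^ 2) / 2) ≤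
      𝔼 c, |f c| ^ (1 + σ ^ 2) := by
  have h := two_point_inequality (p := 1 + σ ^ 2) (by nlinarith) (by nlinarith)
    ((f true + f false) / 2) ((f true - f false) / 2)
  simp only [expect_bool, Fintype.sum_bool, noiseWeight, if_true, Bool.true_eq_false,
    Bool.false_eq_true, if_false]
  convert h using 3 <;> ring_nf

theorem expect_noiseOp_sq_le {σ : ℝ} (hσ0 : 0 ≤ σ) (hσ1 : σ ≤ 1) {n : ℕ}
    (h : (Fin n → Bool) → ℝ) :
    𝔼 x, noiseOp σ h x ^ 2 ≤ (𝔼 x, |h x| ^ (1 + σ ^ 2)) ^ (2 / (1 + σ ^ 2)) := by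
  set p := 1 + σ ^ 2
  have hp : 0 < p := by positivity
  have hexp : 2 / p = (p / 2)⁻¹ := (inv_div _ _).symm
  induction n with
  | zero =>
    simp only [noiseOp_fin_zero, Fintype.expect_eq_sum_div_card, Fintype.card_unique,
      Fintype.sum_unique]
    rw [← sq_rpow_div_two, hexp, Nat.cast_one, div_one, div_one,
      rpow_rpow_inv (by positivity) (by positivity)]
  | succ n ih =>
    let G : Bool → (Fin n → Bool) → ℝ := fun c y => ∑ b, noiseWeight σ c b * h (Fin.cons b y)
    calc 𝔼 x, noiseOp σ h x ^ 2 = 𝔼 c, 𝔼 x, noiseOp σ (G c) x ^ 2 := by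
          simp only [expect_fin_cons (fun x => noiseOp σ h x ^ 2), noiseOp_cons]
          rfl
      _ ≤ 𝔼 c, (𝔼 x, (G c x ^ 2) ^ (p / 2)) ^ (p / 2)⁻¹ := by
          simp only [sq_rpow_div_two, ← hexp]
          exact expect_le_expect fun c _ => ih (G c)
      _ ≤ (𝔼 x, (𝔼 c, G c x ^ 2) ^ (p / 2)) ^ (p / 2)⁻¹ :=
          expect_rpow_inv_le_rpow_inv_expect (by positivity) (by nlinarith) fun _ _ => sq_nonneg _
      _ ≤ (𝔼 x, 𝔼 c, |h (Fin.cons c x)| ^ p) ^ (p / 2)⁻¹ := by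
          gcongr with x
          exact rpow_expect_sq_sum_noiseWeight_le hσ0 hσ1 fun b => h (Fin.cons b x)
      _ = (𝔼 x, |h x| ^ p) ^ (2 / p) := by
          rw [expect_comm, ← expect_fin_cons fun x => |h x| ^ p, hexp]

theorem expect_mul_noiseOp_le {ρ : ℝ} (hρ0 : 0 ≤ ρ) (hρ1 : ρ ≤ 1) {n : ℕ}
    (u w : (Fin n → Bool) → ℝ) :
    𝔼 x, u x * noiseOp ρ w x ≤
      (𝔼 x, |u x| ^ (1 + ρ)) ^ (1 + ρ)⁻¹ * (𝔼 x, |w x| ^ (1 + ρ)) ^ (1 + ρ)⁻¹ := by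
  obtain ⟨σ, hσ0, rfl⟩ : ∃ σ, 0 ≤ σ ∧ σ ^ 2 = ρ := ⟨√ρ, sqrt_nonneg ρ, sq_sqrt hρ0⟩
  have hσ1 : σ ≤ 1 := by nlinarith
  have hnorm (h : (Fin n → Bool) → ℝ) :
      𝔼 x, noiseOp σ h x ^ 2 ≤ ((𝔼 x, |h x| ^ (1 + σ ^ 2)) ^ (1 + σ ^ 2)⁻¹) ^ 2 := by
    rw [← rpow_natCast, ← rpow_mul (expect_nonneg fun x _ => by positivity)]
    convert expect_noiseOp_sq_le hσ0 hσ1 h using 2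
    push_cast
    ring
  rw [show noiseOp (σ ^ 2) w = noiseOp σ (noiseOp σ w) by rw [noiseOp_noiseOp, sq],
    expect_mul_noiseOp]
  refine (le_abs_self _).trans (abs_le_of_sq_le_sq ?_ (by positivity))
  calc (𝔼 x, noiseOp σ u x * noiseOp σ w x) ^ 2
      ≤ (𝔼 x, noiseOp σ u x ^ 2) * 𝔼 x, noiseOp σ w x ^ 2 := expect_mul_sq_le_sq_mul_sq _ _ _
    _ ≤ ((𝔼 x, |u x| ^ (1 + σ ^ 2)) ^ (1 + σ ^ 2)⁻¹ *
          (𝔼 x, |w x| ^ (1 + σ ^ 2)) ^ (1 + σ ^ 2)⁻¹) ^ 2 := by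
        rw [mul_pow]
        exact mul_le_mul (hnorm u) (hnorm w) (expect_nonneg fun _ _ => sq_nonneg _) (sq_nonneg _)

lemma pairWeight_eq_noiseKernel (ε : ℝ) {n : ℕ} (x y : Fin n → Bool) :
    pairWeight ε x y = noiseKernel (1 - 2 * ε) x y / 2 ^ n := by
  calc pairWeight ε x y = ∏ i, noiseWeight (1 - 2 * ε) (x i) (y i) / 2 :=
        prod_congr rfl fun i _ => by simp only [noiseWeight]; split_ifs <;> ring
    _ = noiseKernel (1 - 2 * ε) x y / 2 ^ n := by
        rw [prod_div_distrib, prod_const, card_univ, Fintype.card_fin, noiseKernel]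

lemma prPair_eq_sum_expect (ε : ℝ) {n k : ℕ} (f g : (Fin n → Bool) → (Fin k → Bool)) :
    prPair ε (fun x y => f x = g y) = ∑ z, 𝔼 x, (if f x = z then 1 else 0) *
      noiseOp (1 - 2 * ε) (fun y => if g y = z then 1 else 0) x := by
  simp only [prPair, pairWeight_eq_noiseKernel, Fintype.expect_eq_sum_div_card, noiseOp,
    Fintype.card_fun, Fintype.card_bool, Fintype.card_fin, Nat.cast_pow, Nat.cast_ofNat, sum_div]
  rw [eq_comm, Finset.sum_comm]
  refine sum_congr rfl fun x _ => ?_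
  simp only [ite_mul, one_mul, zero_mul, mul_ite, mul_one, mul_zero]
  simp [ite_div, sum_div, eq_comm]

lemma expect_abs_ite_rpow_eq_outDist {n k : ℕ} (f : (Fin n → Bool) → (Fin k → Bool))
    (z : Fin k → Bool) {p : ℝ} (hp : p ≠ 0) :
    𝔼 x, |if f x = z then (1 : ℝ) else 0| ^ p = outDist f z := by
  rw [outDist, Fintype.expect_eq_sum_div_card, Fintype.card_fun, Fintype.card_bool,
    Fintype.card_fin]
  push_cast
  congr 1
  exact sum_congr rfl fun x _ => by split_ifs <;> simp [zero_rpow hp]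

theorem stmt2 {n k : ℕ} (ε : ℝ) (hε0 : 0 ≤ ε) (hε1 : ε ≤ 1 / 2)
    (f g : (Fin n → Bool) → (Fin k → Bool))
    (hf : ∀ z, outDist f z = 1 / 2 ^ k)
    (hg : ∀ z, outDist g z = 1 / 2 ^ k) :
    prPair ε (fun x y => f x = g y) ≤ (2 : ℝ) ^ (-((k : ℝ) * ε) / (1 - ε)) := by
  have hp : 1 + (1 - 2 * ε) ≠ 0 := by linarith
  have hnorm : (1 / 2 ^ k : ℝ) ^ (1 + (1 - 2 * ε))⁻¹ = 2 ^ (-(k : ℝ) * (1 + (1 - 2 * ε))⁻¹) := by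
    rw [one_div, ← rpow_natCast, ← rpow_neg two_pos.le, ← rpow_mul two_pos.le]
  have hterm (z : Fin k → Bool) :
      𝔼 x, (if f x = z then 1 else 0) * noiseOp (1 - 2 * ε) (fun y => if g y = z then 1 else 0) x
        ≤ 2 ^ (-(k : ℝ) * (1 + (1 - 2 * ε))⁻¹) * 2 ^ (-(k : ℝ) * (1 + (1 - 2 * ε))⁻¹) := by
    have := expect_mul_noiseOp_le (ρ := 1 - 2 * ε) (by linarith) (by linarith)
      (fun x => if f x = z then (1 : ℝ) else 0) (fun y => if g y = z then 1 else 0)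
    rwa [expect_abs_ite_rpow_eq_outDist _ _ hp, expect_abs_ite_rpow_eq_outDist _ _ hp, hf, hg,
      hnorm] at this
  rw [prPair_eq_sum_expect]
  refine (sum_le_sum fun z _ => hterm z).trans_eq ?_
  rw [sum_const, card_univ, Fintype.card_fun, Fintype.card_bool, Fintype.card_fin, nsmul_eq_mul,
    Nat.cast_pow, Nat.cast_ofNat, ← rpow_natCast, ← rpow_add two_pos, ← rpow_add two_pos]
  congr 1
  field_simp [show 1 - ε ≠ 0 by linarith]
  ring
end
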